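/- Let r > 1 be an integer and R = ℤ/rℤ. Every pair of distinct points of R² is contained in at most one line of R² if and only if r is prime. -/

import Mathlib

/-- `B` is the set of pairs `(u,v)` occurring as a row of some invertible `2 × 2`
matrix with entries in `R`. -/
def Bset (R : Type*) [CommRing R] : Set (R × R) :=
  {uv | ∃ M : Matrix (Fin 2) (Fin 2) R, IsUnit M.det ∧ ∃ i : Fin 2, M i 0 = uv.1 ∧ M i 1 = uv.2}

/-- A line in `R²` is a subset of the form `{(a + ℓu, b + ℓv) : ℓ ∈ R}` for some
`(a,b) ∈ R²` and `(u,v) ∈ B`. -/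
def IsLine {R : Type*} [CommRing R] (L : Set (R × R)) : Prop :=
  ∃ a b : R, ∃ uv : R × R, uv ∈ Bset R ∧
    L = {p | ∃ ℓ : R, p = (a + ℓ * uv.1, b + ℓ * uv.2)}

/-!
Over a field, a parametrized line `s ↦ a + s • w` through two distinct points `p ≠ q`
can be reparametrized as `t ↦ p + t • (q - p)`, so it is determined by `p` and `q`.
Conversely, if `x * y = 0` with `x, y ≠ 0`, the lines `ℓ ↦ (ℓ, 0)` and `ℓ ↦ (ℓ, ℓ y)`
are distinct but both pass through `(0, 0)` and `(x, 0)`; so unique lines force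
`ZMod r` to have no zero divisors, i.e. `r` to be prime.
-/

open Set

def LinesUnique (R : Type*) [CommRing R] : Prop :=
  ∀ p q : R × R, p ≠ q → ∀ L₁ L₂ : Set (R × R), IsLine L₁ → IsLine L₂ →
    p ∈ L₁ → q ∈ L₁ → p ∈ L₂ → q ∈ L₂ → L₁ = L₂

section Module

variable {K V : Type*} [Field K] [AddCommGroup V] [Module K V]

theorem range_add_smul_eq_of_mem {a w p q : V} (hp : p ∈ range fun s : K ↦ a + s • w)
    (hq : q ∈ range fun s : K ↦ a + s • w) (hpq : p ≠ q) :
    (range fun s : K ↦ a + s • w) = range fun t : K ↦ p + t • (q - p) := by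
  obtain ⟨ℓ, rfl⟩ := hp
  obtain ⟨m, rfl⟩ := hq
  have hmℓ : m - ℓ ≠ 0 := sub_ne_zero.mpr fun h ↦ hpq (by rw [h])
  have hdir : a + m • w - (a + ℓ • w) = (m - ℓ) • w := by module
  ext x
  simp only [mem_range, hdir, smul_smul]
  constructor
  · rintro ⟨s, rfl⟩
    refine ⟨(s - ℓ) / (m - ℓ), ?_⟩
    rw [div_mul_cancel₀ _ hmℓ]
    module
  · rintro ⟨t, rfl⟩
    exact ⟨ℓ + t * (m - ℓ), by module⟩

theorem range_add_smul_eq_of_two_mem {a a' w w' p q : V}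
    (hp : p ∈ range fun s : K ↦ a + s • w) (hq : q ∈ range fun s : K ↦ a + s • w)
    (hp' : p ∈ range fun s : K ↦ a' + s • w') (hq' : q ∈ range fun s : K ↦ a' + s • w')
    (hpq : p ≠ q) :
    (range fun s : K ↦ a + s • w) = range fun s : K ↦ a' + s • w' := by
  rw [range_add_smul_eq_of_mem hp hq hpq, range_add_smul_eq_of_mem hp' hq' hpq]

end Module

section Lines

variable {R : Type*} [CommRing R]

theorem IsLine.exists_eq_range {L : Set (R × R)} (h : IsLine L) :
    ∃ a w : R × R, L = range fun s : R ↦ a + s • w := by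
  obtain ⟨a, b, uv, -, rfl⟩ := h
  refine ⟨(a, b), uv, ?_⟩
  ext x
  simp [eq_comm, Prod.ext_iff]

theorem one_mk_mem_Bset (y : R) : (1, y) ∈ Bset R :=
  ⟨!![1, y; 0, 1], by simp [Matrix.det_fin_two_of], 0, rfl, rfl⟩

theorem linesUnique_of_field (K : Type*) [Field K] : LinesUnique K := by
  intro p q hpq L₁ L₂ hL₁ hL₂ hp₁ hq₁ hp₂ hq₂
  obtain ⟨a, w, rfl⟩ := hL₁.exists_eq_range
  obtain ⟨a', w', rfl⟩ := hL₂.exists_eq_range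
  exact range_add_smul_eq_of_two_mem hp₁ hq₁ hp₂ hq₂ hpq

theorem LinesUnique.noZeroDivisors (h : LinesUnique R) : NoZeroDivisors R where
  eq_zero_or_eq_zero_of_mul_eq_zero {x y} hxy := by
    by_contra! hne
    let L₁ : Set (R × R) := {p | ∃ ℓ : R, p = (0 + ℓ * 1, 0 + ℓ * 0)}
    let L₂ : Set (R × R) := {p | ∃ ℓ : R, p = (0 + ℓ * 1, 0 + ℓ * y)}
    have hL : L₁ = L₂ :=
      h (0, 0) (x, 0) (fun h ↦ hne.1 (congrArg Prod.fst h).symm) L₁ L₂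
        ⟨0, 0, (1, 0), one_mk_mem_Bset 0, rfl⟩ ⟨0, 0, (1, y), one_mk_mem_Bset y, rfl⟩
        ⟨0, by simp⟩ ⟨x, by simp⟩ ⟨0, by simp⟩ ⟨x, by simp [hxy]⟩
    have h1y : ((1, y) : R × R) ∈ L₁ := hL ▸ ⟨1, by simp⟩
    obtain ⟨ℓ, hℓ⟩ := h1y
    exact hne.2 (by simpa using (Prod.ext_iff.mp hℓ).2)

end Lines

/-- For `R = ℤ/rℤ` with `r > 1`, every pair of distinct points of `R²` lies on at
most one line if and only if `r` is prime. -/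
theorem unique_line_iff_prime (r : ℕ) (hr : 1 < r) :
    (∀ p q : ZMod r × ZMod r, p ≠ q →
      ∀ L₁ L₂ : Set (ZMod r × ZMod r), IsLine L₁ → IsLine L₂ →
        p ∈ L₁ → q ∈ L₁ → p ∈ L₂ → q ∈ L₂ → L₁ = L₂) ↔ Nat.Prime r := by
  change LinesUnique (ZMod r) ↔ _
  constructor
  · intro h
    have := h.noZeroDivisors
    exact CharP.char_is_prime_of_two_le (ZMod r) r hr
  · intro hp
    have : Fact r.Prime := ⟨hp⟩
    exact linesUnique_of_field (ZMod r)
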